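/- Let ψ_N: [0,T] → ℂ^N solve i ψ_N'(t) = (H₀ + u(t) H₁) ψ_N(t) with ψ_N(0) = e_1, where H₀ is diagonal Hermitian and H₁ is Hermitian tridiagonal with zero diagonal and off-diagonal entries of absolute value at most c. Then for every p with p + 1 ≤ N and every t ∈ [0,T], |⟨e_{p+1}, ψ_N(t)⟩| ≤ (2c)^p (∫₀ᵗ |u(s)| ds)^p / p!. -/

import Mathlib

/-!
Norm conservation gives `|ψ_j| ≤ 1` for every component. Since `H₀` is diagonal, in the
interaction picture `e^{iλ_j t} ψ_j(t)` has derivative `-i u(t) e^{iλ_j t} (H₁ ψ(t))_j`, and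
`(H₁ ψ)_j` only involves `ψ_{j-1}` and `ψ_{j+1}`, so it is bounded by `2c` times the bound for
components of index `≥ j - 1`. Inducting on `p` for all components of index `≥ p` at once, each
step integrates `|u(s)| F(s)^p` with `F(s) = ∫₀ˢ |u|`, which is `F(t)^{p+1}/(p+1)` by the
fundamental theorem of calculus for the absolutely continuous function `F^{p+1}`.
-/

open Matrix MeasureTheory intervalIntegral Set Nat

theorem AbsolutelyContinuousOnInterval.pow {f : ℝ → ℝ} {a b : ℝ}
    (hf : AbsolutelyContinuousOnInterval f a b) (n : ℕ) :
    AbsolutelyContinuousOnInterval (fun x ↦ f x ^ n) a b := by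
  induction n with
  | zero =>
    simpa using
      ((LipschitzWith.const (1 : ℝ)).lipschitzOnWith (s := uIcc a b)).absolutelyContinuousOnInterval
  | succ n ih => simpa only [pow_succ] using ih.fun_mul hf

theorem integral_mul_primitive_pow {f : ℝ → ℝ} {a b : ℝ} (hf : IntervalIntegrable f volume a b)
    (n : ℕ) :
    ∫ x in a..b, f x * (∫ s in a..x, f s) ^ n = (∫ x in a..b, f x) ^ (n + 1) / (n + 1) := by
  set F := fun x ↦ ∫ s in a..x, f s
  have hF : AbsolutelyContinuousOnInterval F a b :=
    hf.absolutelyContinuousOnInterval_intervalIntegral left_mem_uIcc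
  have hFTC : ∫ x in a..b, deriv (fun x ↦ F x ^ (n + 1)) x = F b ^ (n + 1) := by
    simpa [F] using (hF.pow (n + 1)).integral_deriv_eq_sub
  rw [eq_div_iff (by positivity), ← hFTC, ← intervalIntegral.integral_mul_const]
  refine integral_congr_ae ?_
  filter_upwards [hf.ae_hasDerivAt_integral] with x hx hxI
  rw [((hx (uIoc_subset_uIcc hxI) a left_mem_uIcc).fun_pow (n + 1)).deriv]
  push_cast
  ring

theorem norm_eq_of_hasDerivAt_of_inner_eq_zero {E : Type*} [NormedAddCommGroup E]
    [InnerProductSpace ℝ E] {ψ ψ' : ℝ → E} {a b : ℝ}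
    (hψ : ∀ t ∈ Icc a b, HasDerivAt ψ (ψ' t) t)
    (horth : ∀ t ∈ Icc a b, inner ℝ (ψ t) (ψ' t) = 0) :
    ∀ t ∈ Icc a b, ‖ψ t‖ = ‖ψ a‖ := by
  have hderiv : ∀ t ∈ Icc a b, HasDerivAt (‖ψ ·‖ ^ 2) 0 t := fun t ht ↦ by
    simpa [horth t ht] using (hψ t ht).norm_sq
  have hconst := constant_of_has_deriv_right_zero
    (fun t ht ↦ (hderiv t ht).continuousAt.continuousWithinAt)
    (fun t ht ↦ (hderiv t (Ico_subset_Icc_self ht)).hasDerivWithinAt)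
  intro t ht
  simpa using congrArg Real.sqrt (hconst t ht)

theorem Matrix.IsHermitian.re_inner_neg_I_smul_mulVec {ι : Type*} [Fintype ι]
    {M : Matrix ι ι ℂ} (hM : M.IsHermitian) (v : ι → ℂ) :
    (inner ℂ (WithLp.toLp 2 v) (WithLp.toLp 2 ((-Complex.I) • (M *ᵥ v)))).re = 0 := by
  rw [EuclideanSpace.inner_toLp_toLp, dotProduct_comm, dotProduct_smul]
  simpa using hM.im_star_dotProduct_mulVec_self v

theorem Matrix.norm_toLp_eq_of_hasDerivAt_neg_I_smul_mulVec {ι : Type*} [Fintype ι]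
    {M : ℝ → Matrix ι ι ℂ} {ψ : ℝ → ι → ℂ} {a b : ℝ}
    (hM : ∀ t ∈ Icc a b, (M t).IsHermitian)
    (hψ : ∀ t ∈ Icc a b, HasDerivAt ψ ((-Complex.I) • (M t *ᵥ ψ t)) t) :
    ∀ t ∈ Icc a b, ‖WithLp.toLp 2 (ψ t)‖ = ‖WithLp.toLp 2 (ψ a)‖ := by
  let _ := InnerProductSpace.complexToReal (G := EuclideanSpace ℂ ι)
  refine norm_eq_of_hasDerivAt_of_inner_eq_zero
    (ψ' := fun t ↦ WithLp.toLp 2 ((-Complex.I) • (M t *ᵥ ψ t))) (fun t ht ↦ ?_)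
    (fun t ht ↦ (hM t ht).re_inner_neg_I_smul_mulVec (ψ t))
  exact (PiLp.continuousLinearEquiv 2 ℝ (fun _ : ι ↦ ℂ)).symm.hasFDerivAt.comp_hasDerivAt t
    (hψ t ht)

theorem norm_le_norm_add_integral_of_hasDerivAt {z g : ℝ → ℂ} {ω a b : ℝ} (hab : a ≤ b)
    (hz : ∀ s ∈ Icc a b, HasDerivAt z (-Complex.I * ω * z s + g s) s)
    (hg : IntervalIntegrable g volume a b) :
    ‖z b‖ ≤ ‖z a‖ + ∫ s in a..b, ‖g s‖ := by
  set phase : ℝ → ℂ := fun s ↦ Complex.exp (Complex.I * ω * s)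
  have hphase : ∀ s, HasDerivAt phase (phase s * (Complex.I * ω)) s := fun s ↦ by
    simpa [phase] using ((hasDerivAt_id (s : ℂ)).const_mul (Complex.I * ω)).cexp.comp_ofReal
  have norm_phase : ∀ s, ‖phase s‖ = 1 := fun s ↦ by
    simpa [phase, mul_comm, mul_left_comm] using Complex.norm_exp_ofReal_mul_I (ω * s)
  have hderiv : ∀ s ∈ uIcc a b, HasDerivAt (fun s ↦ phase s * z s) (phase s * g s) s := by
    intro s hs
    rw [uIcc_of_le hab] at hs
    exact ((hphase s).fun_mul (hz s hs)).congr_deriv (by ring)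
  have hint : IntervalIntegrable (fun s ↦ phase s * g s) volume a b :=
    hg.continuousOn_mul (Continuous.continuousOn (by fun_prop))
  calc ‖z b‖ = ‖phase a * z a + ∫ s in a..b, phase s * g s‖ := by
        rw [integral_eq_sub_of_hasDerivAt hderiv hint, add_sub_cancel, norm_mul, norm_phase,
          one_mul]
    _ ≤ ‖z a‖ + ∫ s in a..b, ‖g s‖ := by
        refine (norm_add_le _ _).trans (add_le_add (by rw [norm_mul, norm_phase, one_mul]) ?_)
        simpa [norm_phase] using norm_integral_le_integral_norm (f := fun s ↦ phase s * g s) hab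

theorem norm_le_integral_abs_pow_of_hasDerivAt {z g : ℝ → ℂ} {u : ℝ → ℝ} {ω t K : ℝ} {p : ℕ}
    (ht : 0 ≤ t) (hz : ∀ s ∈ Icc 0 t, HasDerivAt z (-Complex.I * ω * z s + g s) s)
    (hz0 : z 0 = 0) (hu : IntervalIntegrable u volume 0 t) (hg : IntervalIntegrable g volume 0 t)
    (hg_le : ∀ s ∈ Icc 0 t, ‖g s‖ ≤ K * (|u s| * (∫ r in (0 : ℝ)..s, |u r|) ^ p)) :
    ‖z t‖ ≤ K * (∫ s in (0 : ℝ)..t, |u s|) ^ (p + 1) / (p + 1) := by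
  have hFc : ContinuousOn (fun s ↦ ∫ r in (0 : ℝ)..s, |u r|) (uIcc 0 t) :=
    (hu.abs.absolutelyContinuousOnInterval_intervalIntegral left_mem_uIcc).continuousOn
  calc ‖z t‖ ≤ ‖z 0‖ + ∫ s in (0 : ℝ)..t, ‖g s‖ := norm_le_norm_add_integral_of_hasDerivAt ht hz hg
    _ ≤ 0 + ∫ s in (0 : ℝ)..t, K * (|u s| * (∫ r in (0 : ℝ)..s, |u r|) ^ p) := by
        rw [hz0, norm_zero]
        gcongr
        exact integral_mono_on ht hg.norm
          ((hu.abs.mul_continuousOn (hFc.pow p)).const_mul _) hg_le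
    _ = K * (∫ s in (0 : ℝ)..t, |u s|) ^ (p + 1) / (p + 1) := by
        rw [zero_add, intervalIntegral.integral_const_mul, integral_mul_primitive_pow hu.abs,
          mul_div_assoc]

theorem Fin.card_filter_val_add_one_eq_le_one {N : ℕ} (m : ℕ) :
    (Finset.univ.filter fun k : Fin N ↦ (k : ℕ) + 1 = m).card ≤ 1 :=
  Finset.card_le_one.2 fun a ha b hb ↦ Fin.ext (by simp at ha hb; omega)

theorem Fin.card_filter_eq_val_add_one_le_one {N : ℕ} (m : ℕ) :
    (Finset.univ.filter fun k : Fin N ↦ m + 1 = k).card ≤ 1 :=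
  Finset.card_le_one.2 fun a ha b hb ↦ Fin.ext (by simp at ha hb; omega)

theorem Matrix.norm_mulVec_apply_le_of_tridiagonal {N : ℕ} {H : Matrix (Fin N) (Fin N) ℂ}
    {c B : ℝ} (hc : 0 ≤ c) (hB : 0 ≤ B) (hH : H.IsHermitian)
    (htri : ∀ i j : Fin N, (i : ℕ) + 1 ≠ j → (j : ℕ) + 1 ≠ i → H i j = 0)
    (hbd : ∀ i j : Fin N, (i : ℕ) + 1 = j → ‖H i j‖ ≤ c) {v : Fin N → ℂ} {j : Fin N}
    (hv : ∀ k : Fin N, (k : ℕ) + 1 = j ∨ (j : ℕ) + 1 = k → ‖v k‖ ≤ B) :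
    ‖(H *ᵥ v) j‖ ≤ 2 * c * B := by
  have hterm : ∀ k, ‖H j k * v k‖ ≤
      (if (k : ℕ) + 1 = j then c * B else 0) + (if (j : ℕ) + 1 = k then c * B else 0) := by
    intro k
    rw [norm_mul]
    by_cases hkj : (k : ℕ) + 1 = j
    · have : ‖H j k‖ ≤ c := by rw [← hH.apply j k, norm_star]; exact hbd k j hkj
      rw [if_pos hkj, if_neg (by omega), add_zero]
      exact mul_le_mul this (hv k (.inl hkj)) (norm_nonneg _) hc
    by_cases hjk : (j : ℕ) + 1 = k
    · rw [if_neg hkj, if_pos hjk, zero_add]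
      exact mul_le_mul (hbd j k hjk) (hv k (.inr hjk)) (norm_nonneg _) hc
    · simp [htri j k hjk hkj, hkj, hjk]
  calc ‖(H *ᵥ v) j‖ = ‖∑ k, H j k * v k‖ := rfl
    _ ≤ ∑ k, ‖H j k * v k‖ := norm_sum_le _ _
    _ ≤ ∑ k : Fin N,
          ((if (k : ℕ) + 1 = j then c * B else 0) + (if (j : ℕ) + 1 = k then c * B else 0)) :=
      Finset.sum_le_sum fun k _ ↦ hterm k
    _ ≤ 1 * (c * B) + 1 * (c * B) := by
      rw [Finset.sum_add_distrib, ← Finset.sum_filter, ← Finset.sum_filter, Finset.sum_const,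
        Finset.sum_const, nsmul_eq_mul, nsmul_eq_mul]
      have := mul_nonneg hc hB
      gcongr
      · exact_mod_cast Fin.card_filter_val_add_one_eq_le_one _
      · exact_mod_cast Fin.card_filter_eq_val_add_one_le_one _
    _ = 2 * c * B := by ring

theorem Matrix.hasDerivAt_apply_of_isDiag {ι : Type*} [Fintype ι]
    {H₀ H₁ : Matrix ι ι ℂ} (hH₀diag : H₀.IsDiag) (hH₀herm : H₀.IsHermitian) {ψ : ℝ → ι → ℂ}
    {r t : ℝ} (hψ : HasDerivAt ψ ((-Complex.I) • ((H₀ + (r : ℂ) • H₁) *ᵥ ψ t)) t) (j : ι) :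
    HasDerivAt (fun s ↦ ψ s j)
      (-Complex.I * (H₀ j j).re * ψ t j + -Complex.I * r * (H₁ *ᵥ ψ t) j) t := by
  have hdiag : (H₀ *ᵥ ψ t) j = (H₀ j j).re * ψ t j := by
    rw [mulVec, dotProduct, Finset.sum_eq_single j (fun k _ hk ↦ by simp [hH₀diag hk.symm])
      (by simp), Complex.conj_eq_iff_re.mp (hH₀herm.apply j j)]
  refine (hasDerivAt_pi.mp hψ j).congr_deriv ?_
  simp only [Pi.smul_apply, add_mulVec, smul_mulVec, Pi.add_apply, hdiag, smul_eq_mul]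
  ring

theorem norm_apply_le_pow_integral_abs_div_factorial {N : ℕ} {T c : ℝ} (hc : 0 ≤ c)
    {H₀ H₁ : Matrix (Fin N) (Fin N) ℂ} (hH₀diag : H₀.IsDiag) (hH₀herm : H₀.IsHermitian)
    (hH₁herm : H₁.IsHermitian)
    (hH₁tri : ∀ i j : Fin N, (i : ℕ) + 1 ≠ j → (j : ℕ) + 1 ≠ i → H₁ i j = 0)
    (hH₁bd : ∀ i j : Fin N, (i : ℕ) + 1 = j → ‖H₁ i j‖ ≤ c)
    {u : ℝ → ℝ} (hu : IntervalIntegrable u volume 0 T) {ψ : ℝ → Fin N → ℂ}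
    (hψ : ∀ t ∈ Icc 0 T, HasDerivAt ψ ((-Complex.I) • ((H₀ + (u t : ℂ) • H₁) *ᵥ ψ t)) t)
    (hψ_le_one : ∀ t ∈ Icc 0 T, ∀ j, ‖ψ t j‖ ≤ 1) (hψ0 : ∀ j : Fin N, (j : ℕ) ≠ 0 → ψ 0 j = 0)
    (p : ℕ) :
    ∀ t ∈ Icc 0 T, ∀ j : Fin N, p ≤ j →
      ‖ψ t j‖ ≤ (2 * c) ^ p * (∫ s in (0 : ℝ)..t, |u s|) ^ p / p ! := by
  induction p with
  | zero => simpa using hψ_le_one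
  | succ p ih =>
    intro t ht j hj
    set F : ℝ → ℝ := fun t ↦ ∫ s in (0 : ℝ)..t, |u s|
    have hIcc : Icc 0 t ⊆ Icc 0 T := Icc_subset_Icc_right ht.2
    have hut : IntervalIntegrable u volume 0 t :=
      hu.mono_set (uIcc_subset_uIcc_left (Icc_subset_uIcc ht))
    have hψc : ContinuousOn ψ (Icc 0 t) := fun s hs ↦
      (hψ s (hIcc hs)).continuousAt.continuousWithinAt
    set g : ℝ → ℂ := fun s ↦ -Complex.I * u s * (H₁ *ᵥ ψ s) j
    have hg : IntervalIntegrable g volume 0 t := by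
      have hcont : ContinuousOn (fun s ↦ -Complex.I * (H₁ *ᵥ ψ s) j) (uIcc 0 t) := by
        rw [uIcc_of_le ht.1]
        fun_prop
      simpa [g, Complex.real_smul, mul_left_comm, mul_assoc] using hut.smul_continuousOn hcont
    have hg_le : ∀ s ∈ Icc 0 t, ‖g s‖ ≤ (2 * c) ^ (p + 1) / p ! * (|u s| * F s ^ p) := by
      intro s hs
      have hF : 0 ≤ F s := integral_nonneg hs.1 fun _ _ ↦ abs_nonneg _
      have hneighbours := Matrix.norm_mulVec_apply_le_of_tridiagonal (v := ψ s) (j := j) hc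
        (by positivity) hH₁herm hH₁tri hH₁bd (fun k hk ↦ ih s (hIcc hs) k (by omega))
      simp only [g, norm_mul, norm_neg, Complex.norm_I, Complex.norm_real, Real.norm_eq_abs,
        one_mul]
      calc |u s| * ‖(H₁ *ᵥ ψ s) j‖ ≤ |u s| * (2 * c * ((2 * c) ^ p * F s ^ p / p !)) := by
            gcongr
        _ = _ := by ring
    have hψj := norm_le_integral_abs_pow_of_hasDerivAt ht.1
      (fun s hs ↦ Matrix.hasDerivAt_apply_of_isDiag hH₀diag hH₀herm (hψ s (hIcc hs)) j)
      (hψ0 j (by omega)) hut hg hg_le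
    rw [factorial_succ]
    push_cast
    convert hψj using 1
    field_simp

theorem stmt12_general (N : ℕ) (hN : 0 < N) (T c : ℝ) (hc : 0 ≤ c)
    (H₀ H₁ : Matrix (Fin N) (Fin N) ℂ)
    (hH₀diag : H₀.IsDiag) (hH₀herm : H₀.IsHermitian) (hH₁herm : H₁.IsHermitian)
    (hH₁tri : ∀ i j : Fin N, (i : ℕ) + 1 ≠ (j : ℕ) → (j : ℕ) + 1 ≠ (i : ℕ) → H₁ i j = 0)
    (hH₁bd : ∀ i j : Fin N, (i : ℕ) + 1 = (j : ℕ) → ‖H₁ i j‖ ≤ c)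
    (u : ℝ → ℝ) (hu : IntervalIntegrable u volume 0 T)
    (ψ : ℝ → (Fin N → ℂ))
    (hψ0 : ψ 0 = Pi.single (⟨0, hN⟩ : Fin N) 1)
    (hψ : ∀ t ∈ Set.Icc 0 T,
      HasDerivAt ψ ((-Complex.I) • ((H₀ + (u t : ℂ) • H₁) *ᵥ ψ t)) t) :
    ∀ t ∈ Set.Icc 0 T, ∀ p : ℕ, ∀ hp : p + 1 ≤ N,
      ‖ψ t ⟨p, hp⟩‖ ≤ (2 * c) ^ p * (∫ s in (0:ℝ)..t, |u s|) ^ p / (p.factorial : ℝ) := by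
  have hconserved := Matrix.norm_toLp_eq_of_hasDerivAt_neg_I_smul_mulVec
    (fun t _ ↦ hH₀herm.add (hH₁herm.smul (by simp [IsSelfAdjoint, Complex.conj_ofReal]))) hψ
  have hψ_le_one : ∀ t ∈ Icc 0 T, ∀ j, ‖ψ t j‖ ≤ 1 := fun t ht j ↦
    (PiLp.norm_apply_le (WithLp.toLp 2 (ψ t)) j).trans (by simp [hconserved t ht, hψ0])
  have hψ0_eq_zero : ∀ j : Fin N, (j : ℕ) ≠ 0 → ψ 0 j = 0 := fun j hj ↦ by
    rw [hψ0, Pi.single_eq_of_ne (fun h ↦ hj (by simp [h]))]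
  intro t ht p hp
  exact norm_apply_le_pow_integral_abs_div_factorial hc hH₀diag hH₀herm hH₁herm hH₁tri hH₁bd hu
    hψ hψ_le_one hψ0_eq_zero p t ht ⟨p, hp⟩ le_rfl

/-- Population bound for a driven tridiagonal system: if `ψ_N` solves
`i ψ_N' = (H₀ + u(t) H₁) ψ_N` starting from `e₁`, with `H₀` diagonal Hermitian and
`H₁` Hermitian tridiagonal with zero diagonal and off-diagonal entries bounded by `c`,
then `|⟨e_{p+1}, ψ_N(t)⟩| ≤ (2c)^p (∫₀ᵗ |u|)^p / p!`. -/
theorem stmt12 (N : ℕ) (hN : 0 < N) (T c : ℝ) (hc : 0 ≤ c) (hT : 0 ≤ T)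
    (H₀ H₁ : Matrix (Fin N) (Fin N) ℂ)
    (hH₀diag : H₀.IsDiag) (hH₀herm : H₀.IsHermitian) (hH₁herm : H₁.IsHermitian)
    (hH₁tri : ∀ i j : Fin N, (i : ℕ) + 1 ≠ (j : ℕ) → (j : ℕ) + 1 ≠ (i : ℕ) → H₁ i j = 0)
    (hH₁bd : ∀ i j : Fin N, (i : ℕ) + 1 = (j : ℕ) → ‖H₁ i j‖ ≤ c)
    (u : ℝ → ℝ) (hu : IntervalIntegrable u volume 0 T)
    (ψ : ℝ → (Fin N → ℂ))
    (hψ0 : ψ 0 = Pi.single (⟨0, hN⟩ : Fin N) 1)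
    (hψ : ∀ t ∈ Set.Icc 0 T,
      HasDerivAt ψ ((-Complex.I) • ((H₀ + (u t : ℂ) • H₁) *ᵥ ψ t)) t) :
    ∀ t ∈ Set.Icc 0 T, ∀ p : ℕ, ∀ hp : p + 1 ≤ N,
      ‖ψ t ⟨p, hp⟩‖ ≤ (2 * c) ^ p * (∫ s in (0:ℝ)..t, |u s|) ^ p / (p.factorial : ℝ) :=
  stmt12_general N hN T c hc H₀ H₁ hH₀diag hH₀herm hH₁herm hH₁tri hH₁bd u hu ψ hψ0 hψ
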